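/- arXiv:0910.4193 — 2 statements merged into one kernel-verified Lean document; each statement's English description precedes it below -/
import Mathlib

section
/- For every real t ≥ 0 and all integers n, k with 1 ≤ k ≤ n ≤ m, the (n,k) entry of the matrix exponential exp(tG) equals the sum over r from k to n of e^{−r(r−1)t/θ} · (2r−1) · (−1)^{r−k} · k_{(r−1)} · n_{[r]} / ( k! · (r−k)! · n_{(r)} ), where a_{[r]} = a(a−1)(a−2)⋯(a−r+1) denotes the falling factorial and a_{(r)} = a(a+1)⋯(a+r−1) denotes the rising factorial. (This is Tavaré's formula for the probability that n coalescent lineages have exactly k ancestral lineages time t in the past, with time measured so that the coalescence rate for r lineages is r(r−1)/θ.) -/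
open Finset

/-- The index set `{1, …, m}`, realised as a subtype of `Fin (m + 1)`. -/
abbrev CoalIdx (m : ℕ) := {i : Fin (m + 1) // 1 ≤ (i : ℕ)}

/-- The generator `G` of the pure-death coalescent lineage-count chain on `{1, …, m}`:
`G n n = -n(n-1)/θ`, `G n (n-1) = n(n-1)/θ`, and all other entries zero. -/
noncomputable def coalG (m : ℕ) (θ : ℝ) : Matrix (CoalIdx m) (CoalIdx m) ℝ :=
  fun i j =>
    if (j.1 : ℕ) + 1 = (i.1 : ℕ) then
      ((i.1 : ℕ) : ℝ) * (((i.1 : ℕ) : ℝ) - 1) / θ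
    else if (j.1 : ℕ) = (i.1 : ℕ) then
      -(((i.1 : ℕ) : ℝ) * (((i.1 : ℕ) : ℝ) - 1) / θ)
    else 0

/-!
Let `P n r = n_{[r]} / n_{(r)}` and `Q r k = (-1)^{r-k} (2r-1) k_{(r-1)} / (k! (r-k)!)`.
A one-step recurrence for each of these ratios of Pochhammer products shows that the columns
of `P` are right and the rows of `Q` left eigenvectors of `G`, both for the eigenvalue
`-r(r-1)/θ`; these eigenvalues are pairwise distinct, so `Q P` commutes with the diagonal
matrix `D` of them and is therefore diagonal. Both matrices are lower triangular with
`Q r r * P r r = 1`, so `Q P = 1`, `exp (t G) = P exp (t D) Q`, and its `(n, k)` entry is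
Tavaré's sum.
-/

lemma mul_prod_range_add_one (a : ℝ) (r : ℕ) :
    a * ∏ i ∈ range r, (a + 1 + i) = (∏ i ∈ range r, (a + i)) * (a + r) := by
  rw [← prod_range_succ, prod_range_succ', Nat.cast_zero, add_zero, mul_comm]
  exact congrArg (· * a) (prod_congr rfl fun i _ => by push_cast; ring)

lemma mul_prod_range_sub_one (a : ℝ) (r : ℕ) :
    a * ∏ i ∈ range r, (a - 1 - i) = (∏ i ∈ range r, (a - i)) * (a - r) := by
  rw [← prod_range_succ, prod_range_succ', Nat.cast_zero, sub_zero, mul_comm]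
  exact congrArg (· * a) (prod_congr rfl fun i _ => by push_cast; ring)

lemma prod_range_natCast_sub_eq_factorial (r : ℕ) :
    ∏ i ∈ range r, ((r : ℝ) - i) = r.factorial := by
  rw [← Nat.descFactorial_self, Nat.descFactorial_eq_prod_range, Nat.cast_prod]
  exact prod_congr rfl fun i hi => (Nat.cast_sub (mem_range.1 hi).le).symm

namespace Matrix

variable {ι R : Type*} [Fintype ι] [DecidableEq ι] [CommRing R] [NoZeroDivisors R]

lemma apply_eq_zero_of_commute_diagonal {d : ι → R} (hd : Function.Injective d)
    {M : Matrix ι ι R} (h : Commute M (diagonal d)) {i j : ι} (hij : i ≠ j) : M i j = 0 := by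
  have hij' := congrFun (congrFun h.eq i) j
  rw [mul_diagonal, diagonal_mul] at hij'
  have : M i j * (d j - d i) = 0 := by rw [mul_sub, hij', mul_comm, sub_self]
  exact (mul_eq_zero.1 this).resolve_right (sub_ne_zero.2 (hd.ne hij).symm)

lemma mul_eq_one_of_eigenvectors [LinearOrder ι] {A P Q : Matrix ι ι R} {d : ι → R}
    (hd : Function.Injective d) (hAP : A * P = P * diagonal d) (hQA : Q * A = diagonal d * Q)
    (hP : ∀ i j, i < j → P i j = 0) (hQ : ∀ i j, i < j → Q i j = 0)
    (hQP : ∀ i, Q i i * P i i = 1) : Q * P = 1 := by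
  have hcomm : Commute (Q * P) (diagonal d) := by
    rw [commute_iff_eq, Matrix.mul_assoc, ← hAP, ← Matrix.mul_assoc, hQA, Matrix.mul_assoc]
  ext i j
  rcases eq_or_ne i j with rfl | hij
  · rw [one_apply_eq, mul_apply, sum_eq_single i (fun k _ hki => ?_) (by simp), hQP]
    rcases hki.lt_or_gt with h | h
    · rw [hP k i h, mul_zero]
    · rw [hQ i k h, zero_mul]
  · rw [one_apply_ne hij, apply_eq_zero_of_commute_diagonal hd hcomm hij]

lemma exp_smul_apply_of_mul_eq_mul_diagonal {A P Q : Matrix ι ι ℝ} {d : ι → ℝ}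
    (hQP : Q * P = 1) (hAP : A * P = P * diagonal d) (t : ℝ) (i j : ι) :
    NormedSpace.exp (t • A) i j = ∑ r, P i r * Real.exp (t * d r) * Q r j := by
  let U : (Matrix ι ι ℝ)ˣ := ⟨P, Q, mul_eq_one_comm.1 hQP, hQP⟩
  have hA : t • A =
      (U : Matrix ι ι ℝ) * diagonal (t • d) * ((U⁻¹ : (Matrix ι ι ℝ)ˣ) : Matrix ι ι ℝ) := by
    change t • A = P * diagonal (t • d) * Q
    rw [diagonal_smul, Matrix.mul_smul, ← hAP, smul_mul_assoc, Matrix.mul_assoc,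
      mul_eq_one_comm.1 hQP, Matrix.mul_one]
  rw [hA, Matrix.exp_units_conj, Matrix.exp_diagonal]
  change (P * diagonal (NormedSpace.exp (t • d)) * Q) i j = _
  rw [mul_apply]
  simp only [mul_diagonal, Pi.coe_exp, Pi.smul_apply, smul_eq_mul, ← Real.exp_eq_exp_ℝ]

end Matrix

noncomputable def coalRightEig (x : ℝ) (r : ℕ) : ℝ :=
  (∏ i ∈ range r, (x - i)) / ∏ i ∈ range r, (x + i)

/-- `r.choose k / r!` is `1 / (k! (r - k)!)` for `k ≤ r` and vanishes for `r < k`. -/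
noncomputable def coalLeftEig (r k : ℕ) : ℝ :=
  (-1) ^ (r - k) * (2 * r - 1) * (∏ i ∈ range (r - 1), ((k : ℝ) + i)) * r.choose k /
    r.factorial

lemma coalRightEig_natCast_of_lt {n r : ℕ} (h : n < r) : coalRightEig n r = 0 := by
  rw [coalRightEig, prod_eq_zero (mem_range.2 h) (sub_self _), zero_div]

lemma coalRightEig_sub_one (x : ℝ) (hx : 1 < x) (r : ℕ) :
    x * (x - 1) * (coalRightEig (x - 1) r - coalRightEig x r) =
      -(r * (r - 1)) * coalRightEig x r := by
  have hrise := mul_prod_range_add_one (x - 1) r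
  rw [sub_add_cancel] at hrise
  have hpos₀ : ∏ i ∈ range r, (x - 1 + i) ≠ 0 := (prod_pos fun i _ => by positivity).ne'
  have hpos₁ : ∏ i ∈ range r, (x + i) ≠ 0 := (prod_pos fun i _ => by positivity).ne'
  unfold coalRightEig
  field_simp
  linear_combination ((x - 1) * ∏ i ∈ range r, (x + i)) * mul_prod_range_sub_one x r +
    ((∏ i ∈ range r, (x - i)) * (x - r)) * hrise

lemma coalRightEig_natCast_sub_one (n r : ℕ) (hn : 1 ≤ n) :
    n * (n - 1) * (coalRightEig ((n - 1 : ℕ) : ℝ) r - coalRightEig n r) =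
      -(r * (r - 1)) * coalRightEig n r := by
  rcases hn.eq_or_lt with rfl | hn
  · rcases Nat.lt_or_ge 1 r with hr | hr
    · rw [coalRightEig_natCast_of_lt hr]; ring
    · interval_cases r <;> simp
  · rw [Nat.cast_sub hn.le, Nat.cast_one]
    exact coalRightEig_sub_one n (by exact_mod_cast hn) r

lemma coalLeftEig_of_lt {r k : ℕ} (h : r < k) : coalLeftEig r k = 0 := by
  simp [coalLeftEig, Nat.choose_eq_zero_of_lt h]

lemma coalLeftEig_succ (r k : ℕ) :
    (k + 1) * k * coalLeftEig r (k + 1) - k * (k - 1) * coalLeftEig r k =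
      -(r * (r - 1)) * coalLeftEig r k := by
  rcases lt_or_ge k r with hkr | hrk
  · have hrise := mul_prod_range_add_one k (r - 1)
    rw [Nat.cast_sub (by omega : 1 ≤ r), Nat.cast_one] at hrise
    have hchoose : (r.choose (k + 1) : ℝ) * (k + 1) = r.choose k * (r - k) := by
      have h := congrArg (Nat.cast : ℕ → ℝ) (Nat.choose_succ_right_eq r k)
      push_cast [Nat.cast_sub hkr.le] at h
      exact h
    have hsign : (-1 : ℝ) ^ (r - k) = -(-1) ^ (r - (k + 1)) := by
      rw [show r - k = r - (k + 1) + 1 by omega, pow_succ]; ring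
    unfold coalLeftEig
    push_cast
    rw [hsign]
    linear_combination (-1 : ℝ) ^ (r - (k + 1)) * (2 * r - 1) / r.factorial *
      ((k + 1) * r.choose (k + 1) * hrise +
        (∏ i ∈ range (r - 1), ((k : ℝ) + i)) * (k + r - 1) * hchoose)
  · rcases hrk.eq_or_lt with rfl | hrk
    · rw [coalLeftEig_of_lt (Nat.lt_succ_self _)]; ring
    · rw [coalLeftEig_of_lt hrk, coalLeftEig_of_lt (hrk.trans (Nat.lt_succ_self k))]; ring

lemma coalLeftEig_mul_coalRightEig_self (r : ℕ) (hr : 1 ≤ r) :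
    coalLeftEig r r * coalRightEig r r = 1 := by
  obtain ⟨s, rfl⟩ : ∃ s, r = s + 1 := ⟨r - 1, by omega⟩
  have hA : ∏ i ∈ range s, ((s + 1 : ℕ) + (i : ℝ)) ≠ 0 := (prod_pos fun i _ => by positivity).ne'
  have hodd : 2 * ((s + 1 : ℕ) : ℝ) - 1 ≠ 0 := by push_cast; linarith [s.cast_nonneg (α := ℝ)]
  unfold coalLeftEig coalRightEig
  rw [prod_range_natCast_sub_eq_factorial, prod_range_succ, Nat.add_sub_cancel, Nat.sub_self,
    pow_zero, Nat.choose_self, Nat.cast_one]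
  field_simp
  push_cast
  ring

lemma coalRightEig_mul_coalLeftEig (n r k : ℕ) (hkr : k ≤ r) :
    coalRightEig n r * coalLeftEig r k =
      ((2 * (r : ℝ) - 1) * (-1 : ℝ) ^ (r - k) *
          (∏ i ∈ Finset.range (r - 1), ((k : ℝ) + (i : ℝ))) *
          (∏ i ∈ Finset.range r, ((n : ℝ) - (i : ℝ)))) /
        ((k.factorial : ℝ) * ((r - k).factorial : ℝ) *
          ∏ i ∈ Finset.range r, ((n : ℝ) + (i : ℝ))) := by
  rw [coalRightEig, coalLeftEig, Nat.cast_choose ℝ hkr]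
  field_simp

lemma sum_coalIdx {M : Type*} [AddCommMonoid M] (m : ℕ) (f : ℕ → M) :
    ∑ i : CoalIdx m, f i.1 = ∑ n ∈ Icc 1 m, f n := by
  refine sum_bij (fun i _ => i.1) (fun i _ => ?_) (fun i _ j _ h => ?_) (fun n hn => ?_)
    (fun _ _ => rfl)
  · have := i.1.2; have := i.2; simp only [mem_Icc]; omega
  · exact Subtype.ext (Fin.ext h)
  · simp only [mem_Icc] at hn
    exact ⟨⟨⟨n, by omega⟩, hn.1⟩, mem_univ _, rfl⟩

lemma coalG_mul_apply (m : ℕ) (θ : ℝ) (i : CoalIdx m) (f : ℕ → ℝ) :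
    ∑ j, coalG m θ i j * f j.1 =
      ((i.1 : ℕ) : ℝ) * (((i.1 : ℕ) : ℝ) - 1) / θ * (f ((i.1 : ℕ) - 1) - f i.1) := by
  obtain ⟨⟨n, hnm⟩, hn1 : 1 ≤ n⟩ := i
  dsimp only
  rcases hn1.eq_or_lt with rfl | hn1
  · simp [coalG]
  refine (sum_coalIdx m fun j => (if j + 1 = n then (n : ℝ) * (n - 1) / θ
      else if j = n then -((n : ℝ) * (n - 1) / θ) else 0) * f j).trans ?_
  rw [sum_congr rfl fun j hj => show _ =
      (if j = n - 1 then (n : ℝ) * (n - 1) / θ * f j else 0) -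
        (if j = n then (n : ℝ) * (n - 1) / θ * f j else 0) by
    split_ifs <;> first | omega | ring]
  rw [sum_sub_distrib, sum_ite_eq', sum_ite_eq', if_pos (by simp; omega),
    if_pos (by simp; omega)]
  ring

lemma mul_coalG_apply (m : ℕ) (θ : ℝ) (k : CoalIdx m) (g : ℕ → ℝ) (hg : g (m + 1) = 0) :
    ∑ i, g i.1 * coalG m θ i k =
      (((k.1 : ℕ) : ℝ) + 1) * (k.1 : ℕ) / θ * g ((k.1 : ℕ) + 1) -
        ((k.1 : ℕ) : ℝ) * (((k.1 : ℕ) : ℝ) - 1) / θ * g k.1 := by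
  obtain ⟨⟨n, hnm⟩, hn1 : 1 ≤ n⟩ := k
  dsimp only
  refine (sum_coalIdx m fun i => g i * (if n + 1 = i then (i : ℝ) * (i - 1) / θ
      else if n = i then -((i : ℝ) * (i - 1) / θ) else 0)).trans ?_
  rw [sum_congr rfl fun i hi => show _ =
      (if i = n + 1 then ((n : ℝ) + 1) * n / θ * g i else 0) -
        (if i = n then (n : ℝ) * (n - 1) / θ * g i else 0) by
    split_ifs <;> first | omega | (subst_vars; push_cast; ring)]
  rw [sum_sub_distrib, sum_ite_eq', sum_ite_eq', if_pos (mem_Icc.2 ⟨hn1, Nat.lt_succ_iff.1 hnm⟩)]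
  split_ifs with h
  · rfl
  · rw [show n + 1 = m + 1 by simp at h; omega, hg]; ring

noncomputable def coalEigenvalue (θ : ℝ) (r : ℕ) : ℝ := -(r * (r - 1)) / θ

lemma coalEigenvalue_injOn {θ : ℝ} (hθ : θ ≠ 0) : Set.InjOn (coalEigenvalue θ) {r | 1 ≤ r} := by
  intro a (ha : 1 ≤ a) b (hb : 1 ≤ b) hab
  have hfactor : ((a : ℝ) - b) * (a + b - 1) = 0 := by
    unfold coalEigenvalue at hab
    field_simp at hab
    linear_combination -hab
  have hpos : (0 : ℝ) < a + b - 1 := by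
    have : (1 : ℝ) ≤ a := by exact_mod_cast ha
    have : (1 : ℝ) ≤ b := by exact_mod_cast hb
    linarith
  exact_mod_cast sub_eq_zero.1 ((mul_eq_zero.1 hfactor).resolve_right hpos.ne')

noncomputable def coalP (m : ℕ) : Matrix (CoalIdx m) (CoalIdx m) ℝ :=
  Matrix.of fun n r => coalRightEig ((n.1 : ℕ) : ℝ) r.1

noncomputable def coalQ (m : ℕ) : Matrix (CoalIdx m) (CoalIdx m) ℝ :=
  Matrix.of fun r k => coalLeftEig r.1 k.1

noncomputable def coalD (m : ℕ) (θ : ℝ) : CoalIdx m → ℝ := fun r => coalEigenvalue θ r.1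

lemma coalD_injective (m : ℕ) {θ : ℝ} (hθ : θ ≠ 0) : Function.Injective (coalD m θ) :=
  fun i j h => Subtype.ext (Fin.ext (coalEigenvalue_injOn hθ i.2 j.2 h))

lemma coalG_mul_coalP (m : ℕ) (θ : ℝ) :
    coalG m θ * coalP m = coalP m * Matrix.diagonal (coalD m θ) := by
  ext n r
  rw [Matrix.mul_apply, Matrix.mul_diagonal]
  refine (coalG_mul_apply m θ n fun j => coalRightEig j r.1).trans ?_
  simp only [coalP, coalD, coalEigenvalue, Matrix.of_apply]
  linear_combination (1 / θ) * coalRightEig_natCast_sub_one n.1 r.1 n.2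

lemma coalQ_mul_coalG (m : ℕ) (θ : ℝ) :
    coalQ m * coalG m θ = Matrix.diagonal (coalD m θ) * coalQ m := by
  ext r k
  rw [Matrix.mul_apply, Matrix.diagonal_mul]
  refine (mul_coalG_apply m θ k (fun i => coalLeftEig r.1 i)
    (coalLeftEig_of_lt r.1.2)).trans ?_
  simp only [coalQ, coalD, coalEigenvalue, Matrix.of_apply]
  linear_combination (1 / θ) * coalLeftEig_succ r.1 k.1

lemma coalQ_mul_coalP (m : ℕ) {θ : ℝ} (hθ : θ ≠ 0) : coalQ m * coalP m = 1 :=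
  Matrix.mul_eq_one_of_eigenvectors (coalD_injective m hθ) (coalG_mul_coalP m θ)
    (coalQ_mul_coalG m θ) (fun _ _ h => coalRightEig_natCast_of_lt h)
    (fun _ _ h => coalLeftEig_of_lt h) (fun r => coalLeftEig_mul_coalRightEig_self r.1 r.2)

theorem stmt0_general (m : ℕ) (θ : ℝ) (hθ : 0 < θ)
    (t : ℝ) (n k : ℕ) (hk : 1 ≤ k) (hkn : k ≤ n) (hnm : n ≤ m) :
    NormedSpace.exp (t • coalG m θ)
        ⟨⟨n, Nat.lt_succ_of_le hnm⟩, hk.trans hkn⟩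
        ⟨⟨k, Nat.lt_succ_of_le (hkn.trans hnm)⟩, hk⟩ =
      ∑ r ∈ Finset.Icc k n,
        Real.exp (-((r : ℝ) * ((r : ℝ) - 1) * t) / θ) *
          ((2 * (r : ℝ) - 1) * (-1 : ℝ) ^ (r - k) *
            (∏ i ∈ Finset.range (r - 1), ((k : ℝ) + (i : ℝ))) *
            (∏ i ∈ Finset.range r, ((n : ℝ) - (i : ℝ)))) /
          ((k.factorial : ℝ) * ((r - k).factorial : ℝ) *
            ∏ i ∈ Finset.range r, ((n : ℝ) + (i : ℝ))) := by
  rw [Matrix.exp_smul_apply_of_mul_eq_mul_diagonal (coalQ_mul_coalP m hθ.ne')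
    (coalG_mul_coalP m θ)]
  refine (sum_coalIdx m fun r =>
    coalRightEig n r * Real.exp (t * coalEigenvalue θ r) * coalLeftEig r k).trans ?_
  rw [← sum_subset (Icc_subset_Icc hk hnm) fun r _ hr => ?_]
  · refine sum_congr rfl fun r hr => ?_
    have hexp : t * coalEigenvalue θ r = -((r : ℝ) * (r - 1) * t) / θ := by
      rw [coalEigenvalue]; ring
    rw [hexp, mul_right_comm, coalRightEig_mul_coalLeftEig n r k (mem_Icc.1 hr).1, mul_comm,
      mul_div_assoc']
  · rw [mem_Icc, not_and_or, not_le, not_le] at hr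
    rcases hr with h | h
    · rw [coalLeftEig_of_lt h, mul_zero]
    · rw [coalRightEig_natCast_of_lt h, zero_mul, zero_mul]

/-- Tavaré's formula: for `t ≥ 0` and `1 ≤ k ≤ n ≤ m`, the `(n,k)` entry of `exp (t G)` equals
`∑_{r=k}^{n} e^{-r(r-1)t/θ} (2r-1) (-1)^{r-k} k_{(r-1)} n_{[r]} / (k! (r-k)! n_{(r)})`,
where `a_{[r]}` is the falling factorial and `a_{(r)}` is the rising factorial. -/
theorem stmt0 (m : ℕ) (hm : 1 ≤ m) (θ : ℝ) (hθ : 0 < θ)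
    (t : ℝ) (ht : 0 ≤ t) (n k : ℕ) (hk : 1 ≤ k) (hkn : k ≤ n) (hnm : n ≤ m) :
    NormedSpace.exp (t • coalG m θ)
        ⟨⟨n, Nat.lt_succ_of_le hnm⟩, hk.trans hkn⟩
        ⟨⟨k, Nat.lt_succ_of_le (hkn.trans hnm)⟩, hk⟩ =
      ∑ r ∈ Finset.Icc k n,
        Real.exp (-((r : ℝ) * ((r : ℝ) - 1) * t) / θ) *
          ((2 * (r : ℝ) - 1) * (-1 : ℝ) ^ (r - k) *
            (∏ i ∈ Finset.range (r - 1), ((k : ℝ) + (i : ℝ))) *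
            (∏ i ∈ Finset.range r, ((n : ℝ) - (i : ℝ)))) /
          ((k.factorial : ℝ) * ((r - k).factorial : ℝ) *
            ∏ i ∈ Finset.range r, ((n : ℝ) + (i : ℝ))) :=
  stmt0_general m θ hθ t n k hk hkn hnm
end

section
/- Let A be an event and let N_B, R_B, N_T, R_T be random variables with values in the natural numbers such that almost surely 1 ≤ N_T ≤ N_B ≤ m, R_B ≤ N_B, and R_T ≤ N_T, where m ≥ 1 is a fixed integer. Assume: (i) for all natural numbers n_b, r_b, n_t, r_t, P(A ∩ {N_B = n_b, R_B = r_b, N_T = n_t, R_T = r_t}) = P(A | N_B = n_b, R_B = r_b) · P(N_B = n_b, R_B = r_b, N_T = n_t, R_T = r_t) (A is conditionally independent of (N_T, R_T) given (N_B, R_B)); (ii) for all natural numbers n_b, n_t, r_t with P(N_T = n_t, R_T = r_t) > 0, P(N_B = n_b | N_T = n_t, R_T = r_t) = P(N_B = n_b | N_T = n_t) (N_B is conditionally independent of R_T given N_T). Then for every integer n_t with 1 ≤ n_t ≤ m and every integer r_t with 0 ≤ r_t ≤ n_t: P(A | N_T = n_t, R_T = r_t) · P(N_T = n_t) = Σ_{n_b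 = n_t}^{m} Σ_{r_b = 0}^{n_b} P(A | N_B = n_b, R_B = r_b) · P(N_B = n_b) · P(R_B = r_b | N_B = n_b, N_T = n_t, R_T = r_t) · P(N_T = n_t | N_B = n_b). (This is the recursion expressing the partial likelihood at the top of a species-tree branch in terms of partial likelihoods at the bottom of the branch.) -/
/-!
Write `T = {N_T = n_t, R_T = r_t}`. Condition (ii) gives
`P(N_B = n_b, N_T = n_t) = P(N_B = n_b, T) ⬝ P(N_T = n_t) / P(T)`, and together with the chain
rule and (i) this collapses each summand to
`P(A ∩ {N_B = n_b, R_B = r_b} ∩ T) ⬝ P(N_T = n_t) / P(T)`. Almost surely `N_T ≤ N_B ≤ m` and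
`R_B ≤ N_B`, so these events partition `A ∩ T` up to a null set, and the double sum is
`P(A ∩ T) ⬝ P(N_T = n_t) / P(T) = P(A | T) ⬝ P(N_T = n_t)`.
-/

open MeasureTheory Finset

/-- Conditional probability `P(A | B) = P(A ∩ B) / P(B)`, with the convention
`P(A | B) = 0` when `P(B) = 0` (automatic in `ℝ≥0∞` since `P(A ∩ B) ≤ P(B)`). -/
noncomputable def cp {Ω : Type*} [MeasurableSpace Ω] (P : Measure Ω) (A B : Set Ω) : ENNReal :=
  P (A ∩ B) / P B

section CondProb

variable {Ω : Type*} [MeasurableSpace Ω] (P : Measure Ω)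

lemma cp_eq_zero_of_measure_eq_zero {A B : Set Ω} (hB : P B = 0) : cp P A B = 0 := by
  rw [cp, measure_mono_null Set.inter_subset_right hB, ENNReal.zero_div]

lemma cp_mul_measure [IsFiniteMeasure P] (A B : Set Ω) : cp P A B * P B = P (A ∩ B) := by
  by_cases hB : P B = 0
  · rw [hB, mul_zero, measure_mono_null Set.inter_subset_right hB]
  · exact ENNReal.div_mul_cancel hB (measure_ne_top P B)

end CondProb

lemma measure_eq_sum_measure_inter_preimage {Ω α : Type*} [MeasurableSpace Ω] [MeasurableSpace α]
    [MeasurableSingletonClass α] {μ : Measure Ω} {f : Ω → α} (hf : Measurable f)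
    (s : Finset α) {C : Set Ω} (hC : ∀ᵐ ω ∂μ, ω ∈ C → f ω ∈ s) :
    μ C = ∑ x ∈ s, μ (C ∩ f ⁻¹' {x}) := by
  have hfib (x : α) : MeasurableSet (f ⁻¹' {x}) := hf (measurableSet_singleton x)
  have hcover : (f ⁻¹' s ∩ C : Set Ω) =ᵐ[μ] C := by
    filter_upwards [hC] with ω hω
    exact propext ⟨And.right, fun h => ⟨hω h, h⟩⟩
  simp_rw [Set.inter_comm C, ← Measure.restrict_apply (hfib _),
    sum_measure_preimage_singleton s fun x _ => hfib x,
    Measure.restrict_apply (hf s.measurableSet), measure_congr hcover]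

section BranchRecursion

variable {Ω : Type*} [MeasurableSpace Ω] {P : Measure Ω} {A : Set Ω} {NB RB NT RT : Ω → ℕ}
  {nb rb nt rt : ℕ}

lemma measure_inter_eq_sum_sum {m : ℕ} (hNB : Measurable NB) (hRB : Measurable RB)
    (hae : ∀ᵐ ω ∂P, NT ω ≤ NB ω ∧ NB ω ≤ m ∧ RB ω ≤ NB ω) :
    P (A ∩ {ω | NT ω = nt ∧ RT ω = rt}) =
      ∑ nb ∈ Icc nt m, ∑ rb ∈ range (nb + 1),
        P (A ∩ {ω | NB ω = nb ∧ RB ω = rb ∧ NT ω = nt ∧ RT ω = rt}) := by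
  rw [measure_eq_sum_measure_inter_preimage hNB (Icc nt m)]
  · refine sum_congr rfl fun nb _ => ?_
    rw [measure_eq_sum_measure_inter_preimage hRB (range (nb + 1))]
    · refine sum_congr rfl fun rb _ => congrArg P ?_
      ext ω
      simp only [Set.mem_inter_iff, Set.mem_ofPred_eq, Set.mem_preimage, Set.mem_singleton_iff]
      tauto
    · filter_upwards [hae] with ω h hω
      simp only [Set.mem_inter_iff, Set.mem_ofPred_eq, Set.mem_preimage, Set.mem_singleton_iff,
        mem_range] at hω ⊢
      omega
  · filter_upwards [hae] with ω h hω
    simp only [Set.mem_inter_iff, Set.mem_ofPred_eq, mem_Icc] at hω ⊢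
    omega

lemma summand_eq_measure_inter_mul [IsFiniteMeasure P]
    (hci : P (A ∩ {ω | NB ω = nb ∧ RB ω = rb ∧ NT ω = nt ∧ RT ω = rt}) =
      cp P A {ω | NB ω = nb ∧ RB ω = rb} *
        P {ω | NB ω = nb ∧ RB ω = rb ∧ NT ω = nt ∧ RT ω = rt})
    (hci2 : 0 < P {ω | NT ω = nt ∧ RT ω = rt} →
      cp P {ω | NB ω = nb} {ω | NT ω = nt ∧ RT ω = rt} = cp P {ω | NB ω = nb} {ω | NT ω = nt}) :
    cp P A {ω | NB ω = nb ∧ RB ω = rb} * P {ω | NB ω = nb} *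
        cp P {ω | RB ω = rb} {ω | NB ω = nb ∧ NT ω = nt ∧ RT ω = rt} *
        cp P {ω | NT ω = nt} {ω | NB ω = nb} =
      P (A ∩ {ω | NB ω = nb ∧ RB ω = rb ∧ NT ω = nt ∧ RT ω = rt}) *
        (P {ω | NT ω = nt} / P {ω | NT ω = nt ∧ RT ω = rt}) := by
  by_cases hT : P {ω | NT ω = nt ∧ RT ω = rt} = 0
  · have hF : P {ω | NB ω = nb ∧ NT ω = nt ∧ RT ω = rt} = 0 :=
      measure_mono_null (fun ω h => h.2) hT
    have hAE : P (A ∩ {ω | NB ω = nb ∧ RB ω = rb ∧ NT ω = nt ∧ RT ω = rt}) = 0 :=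
      measure_mono_null (fun ω h => h.2.2.2) hT
    rw [cp_eq_zero_of_measure_eq_zero P hF, hAE, mul_zero, zero_mul, zero_mul]
  have hB : P {ω | NB ω = nb} * cp P {ω | NT ω = nt} {ω | NB ω = nb} =
      P {ω | NB ω = nb ∧ NT ω = nt ∧ RT ω = rt} *
        (P {ω | NT ω = nt} / P {ω | NT ω = nt ∧ RT ω = rt}) :=
    calc P {ω | NB ω = nb} * cp P {ω | NT ω = nt} {ω | NB ω = nb}
        = cp P {ω | NB ω = nb} {ω | NT ω = nt} * P {ω | NT ω = nt} := by
          rw [mul_comm, cp_mul_measure, cp_mul_measure, Set.inter_comm]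
      _ = cp P {ω | NB ω = nb} {ω | NT ω = nt ∧ RT ω = rt} * P {ω | NT ω = nt} := by
          rw [hci2 (pos_iff_ne_zero.2 hT)]
      _ = _ := by
          rw [cp, ENNReal.mul_comm_div]
          rfl
  have hR : cp P {ω | RB ω = rb} {ω | NB ω = nb ∧ NT ω = nt ∧ RT ω = rt} *
      P {ω | NB ω = nb ∧ NT ω = nt ∧ RT ω = rt} =
        P {ω | NB ω = nb ∧ RB ω = rb ∧ NT ω = nt ∧ RT ω = rt} := by
    rw [cp_mul_measure]
    congr 1
    ext ω
    simp only [Set.mem_inter_iff, Set.mem_ofPred_eq]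
    tauto
  calc _ = cp P A {ω | NB ω = nb ∧ RB ω = rb} *
        (cp P {ω | RB ω = rb} {ω | NB ω = nb ∧ NT ω = nt ∧ RT ω = rt} *
          (P {ω | NB ω = nb} * cp P {ω | NT ω = nt} {ω | NB ω = nb})) := by ring
    _ = _ := by
      rw [hB, ← mul_assoc (cp P {ω | RB ω = rb} _), hR, ← mul_assoc, ← hci]

end BranchRecursion

theorem stmt10_general {Ω : Type*} [MeasurableSpace Ω] (P : Measure Ω) [IsProbabilityMeasure P]
    (m : ℕ)
    (A : Set Ω)
    (NB RB NT RT : Ω → ℕ)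
    (hNB : Measurable NB) (hRB : Measurable RB)
    -- almost surely `1 ≤ N_T ≤ N_B ≤ m`, `R_B ≤ N_B` and `R_T ≤ N_T`
    (hae : ∀ᵐ ω ∂P, 1 ≤ NT ω ∧ NT ω ≤ NB ω ∧ NB ω ≤ m ∧ RB ω ≤ NB ω ∧ RT ω ≤ NT ω)
    -- (i) `A` is conditionally independent of `(N_T, R_T)` given `(N_B, R_B)`
    (hci : ∀ nb rb nt rt : ℕ,
      P (A ∩ {ω | NB ω = nb ∧ RB ω = rb ∧ NT ω = nt ∧ RT ω = rt}) =
        cp P A {ω | NB ω = nb ∧ RB ω = rb} *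
          P {ω | NB ω = nb ∧ RB ω = rb ∧ NT ω = nt ∧ RT ω = rt})
    -- (ii) `N_B` is conditionally independent of `R_T` given `N_T`
    (hci2 : ∀ nb nt rt : ℕ, 0 < P {ω | NT ω = nt ∧ RT ω = rt} →
      cp P {ω | NB ω = nb} {ω | NT ω = nt ∧ RT ω = rt} =
        cp P {ω | NB ω = nb} {ω | NT ω = nt})
    (nt : ℕ) (rt : ℕ) :
    cp P A {ω | NT ω = nt ∧ RT ω = rt} * P {ω | NT ω = nt} =
      ∑ nb ∈ Finset.Icc nt m, ∑ rb ∈ Finset.range (nb + 1),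
        cp P A {ω | NB ω = nb ∧ RB ω = rb} * P {ω | NB ω = nb} *
          cp P {ω | RB ω = rb} {ω | NB ω = nb ∧ NT ω = nt ∧ RT ω = rt} *
          cp P {ω | NT ω = nt} {ω | NB ω = nb} := by
  calc cp P A {ω | NT ω = nt ∧ RT ω = rt} * P {ω | NT ω = nt}
      = P (A ∩ {ω | NT ω = nt ∧ RT ω = rt}) *
          (P {ω | NT ω = nt} / P {ω | NT ω = nt ∧ RT ω = rt}) := ENNReal.mul_comm_div
    _ = ∑ nb ∈ Icc nt m, ∑ rb ∈ range (nb + 1),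
          P (A ∩ {ω | NB ω = nb ∧ RB ω = rb ∧ NT ω = nt ∧ RT ω = rt}) *
            (P {ω | NT ω = nt} / P {ω | NT ω = nt ∧ RT ω = rt}) := by
      rw [measure_inter_eq_sum_sum hNB hRB (hae.mono fun ω h => ⟨h.2.1, h.2.2.1, h.2.2.2.1⟩)]
      simp_rw [sum_mul]
    _ = _ := sum_congr rfl fun nb _ => sum_congr rfl fun rb _ =>
      (summand_eq_measure_inter_mul (hci nb rb nt rt) (hci2 nb nt rt)).symm

/-- The recursion expressing the partial likelihood at the top of a species-tree branch in
terms of the partial likelihoods at the bottom of the branch: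
`P(A | N_T = n_t, R_T = r_t) ⬝ P(N_T = n_t)`
`  = ∑_{n_b=n_t}^{m} ∑_{r_b=0}^{n_b} P(A | N_B = n_b, R_B = r_b) ⬝ P(N_B = n_b)`
`      ⬝ P(R_B = r_b | N_B = n_b, N_T = n_t, R_T = r_t) ⬝ P(N_T = n_t | N_B = n_b)`. -/
theorem stmt10 {Ω : Type*} [MeasurableSpace Ω] (P : Measure Ω) [IsProbabilityMeasure P]
    (m : ℕ) (hm : 1 ≤ m)
    (A : Set Ω) (hA : MeasurableSet A)
    (NB RB NT RT : Ω → ℕ)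
    (hNB : Measurable NB) (hRB : Measurable RB) (hNT : Measurable NT) (hRT : Measurable RT)
    -- almost surely `1 ≤ N_T ≤ N_B ≤ m`, `R_B ≤ N_B` and `R_T ≤ N_T`
    (hae : ∀ᵐ ω ∂P, 1 ≤ NT ω ∧ NT ω ≤ NB ω ∧ NB ω ≤ m ∧ RB ω ≤ NB ω ∧ RT ω ≤ NT ω)
    -- (i) `A` is conditionally independent of `(N_T, R_T)` given `(N_B, R_B)`
    (hci : ∀ nb rb nt rt : ℕ,
      P (A ∩ {ω | NB ω = nb ∧ RB ω = rb ∧ NT ω = nt ∧ RT ω = rt}) =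
        cp P A {ω | NB ω = nb ∧ RB ω = rb} *
          P {ω | NB ω = nb ∧ RB ω = rb ∧ NT ω = nt ∧ RT ω = rt})
    -- (ii) `N_B` is conditionally independent of `R_T` given `N_T`
    (hci2 : ∀ nb nt rt : ℕ, 0 < P {ω | NT ω = nt ∧ RT ω = rt} →
      cp P {ω | NB ω = nb} {ω | NT ω = nt ∧ RT ω = rt} =
        cp P {ω | NB ω = nb} {ω | NT ω = nt})
    (nt : ℕ) (hnt : 1 ≤ nt) (hntm : nt ≤ m) (rt : ℕ) (hrt : rt ≤ nt) :
    cp P A {ω | NT ω = nt ∧ RT ω = rt} * P {ω | NT ω = nt} =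
      ∑ nb ∈ Finset.Icc nt m, ∑ rb ∈ Finset.range (nb + 1),
        cp P A {ω | NB ω = nb ∧ RB ω = rb} * P {ω | NB ω = nb} *
          cp P {ω | RB ω = rb} {ω | NB ω = nb ∧ NT ω = nt ∧ RT ω = rt} *
          cp P {ω | NT ω = nt} {ω | NB ω = nb} :=
  stmt10_general P m A NB RB NT RT hNB hRB hae hci hci2 nt rt
end
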